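/- arXiv:2207.13179 — 3 statements merged into one kernel-verified Lean document; each statement's English description precedes it below -/
import Mathlib

section
/- If x and x' both lie in the anchor set A_y of the same label y (with q(x) > 0 and q(x') > 0), then under label shift their domain posterior vectors coincide: q(d | X = x) = q(d | X = x') for every domain d. -/
/-! An anchor point `x` of `A_y` carries no mass under any label `y' ≠ y`, so its domain
posterior `q(d | x)` collapses to `q(d | x, y)`. Label shift identifies the latter with
`q(d | y)`, which does not depend on `x`. -/

open Finset

lemma sum_div_sum_eq_of_forall_ne_eq_zero {Y D : Type} [Fintype Y] [Fintype D]
    (f : Y → D → ℝ) {y : Y} (hf : ∀ y' ≠ y, ∀ d, f y' d = 0) (d : D) :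
    (∑ y', f y' d) / (∑ y', ∑ d', f y' d') = f y d / ∑ d', f y d' := by
  rw [Fintype.sum_eq_single y fun y' hy' => hf y' hy' d,
    Fintype.sum_eq_single y fun y' hy' => sum_eq_zero fun d _ => hf y' hy' d]

lemma eq_zero_of_sum_div_eq_zero {D : Type} [Fintype D] {g : D → ℝ} {c : ℝ}
    (hg : 0 ≤ g) (hc : 0 < c) (h : (∑ d, g d) / c = 0) : g = 0 :=
  (Fintype.sum_eq_zero_iff_of_nonneg hg).mp <|
    (div_eq_zero_iff.mp h).resolve_right hc.ne'

lemma posterior_eq_of_anchor {X Y D : Type} [Fintype X] [Fintype Y] [Fintype D]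
    {q : X → Y → D → ℝ} (hq0 : ∀ x y d, 0 ≤ q x y d) (hqY : ∀ y, 0 < ∑ x, ∑ d, q x y d)
    (hLS : ∀ x y d, 0 < (∑ d', q x y d') →
      q x y d / (∑ d', q x y d') = (∑ x', q x' y d) / (∑ x', ∑ d', q x' y d'))
    {y : Y} {z : X} (hpos : 0 < (∑ d, q z y d) / (∑ x, ∑ d, q x y d))
    (hzero : ∀ y' ≠ y, (∑ d, q z y' d) / (∑ x, ∑ d, q x y' d) = 0) (d : D) :
    (∑ y', q z y' d) / (∑ y', ∑ d', q z y' d') =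
      (∑ x, q x y d) / (∑ x, ∑ d', q x y d') := by
  have hvanish : ∀ y' ≠ y, ∀ d, q z y' d = 0 := fun y' hy' =>
    congrFun (eq_zero_of_sum_div_eq_zero (hq0 z y') (hqY y') (hzero y' hy'))
  rw [sum_div_sum_eq_of_forall_ne_eq_zero (q z) hvanish,
    hLS z y d ((div_pos_iff_of_pos_right (hqY y)).mp hpos)]

theorem stmt_7_general (X Y D : Type) [Fintype X] [Fintype Y] [Fintype D]
    (q : X → Y → D → ℝ)
    (hq0 : ∀ x y d, 0 ≤ q x y d)
    (hqY : ∀ y, 0 < ∑ x, ∑ d, q x y d)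
    (hLS : ∀ x y d, 0 < (∑ d', q x y d') →
      q x y d / (∑ d', q x y d') = (∑ x', q x' y d) / (∑ x', ∑ d', q x' y d'))
    (y : Y) (x x' : X)
    (hxA : 0 < (∑ d, q x y d) / (∑ x'', ∑ d, q x'' y d) ∧
      ∀ y' ≠ y, (∑ d, q x y' d) / (∑ x'', ∑ d, q x'' y' d) = 0)
    (hx'A : 0 < (∑ d, q x' y d) / (∑ x'', ∑ d, q x'' y d) ∧
      ∀ y' ≠ y, (∑ d, q x' y' d) / (∑ x'', ∑ d, q x'' y' d) = 0) :
    ∀ d, (∑ y', q x y' d) / (∑ y', ∑ d', q x y' d') =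
      (∑ y', q x' y' d) / (∑ y', ∑ d', q x' y' d') := by
  intro d
  rw [posterior_eq_of_anchor hq0 hqY hLS hxA.1 hxA.2,
    posterior_eq_of_anchor hq0 hqY hLS hx'A.1 hx'A.2]

/-- Under label shift, two points of the same anchor set A_y have
identical domain posterior vectors: q(d|x) = q(d|x') for every d. -/
theorem stmt_7 (X Y D : Type) [Fintype X] [Fintype Y] [Fintype D]
    (q : X → Y → D → ℝ)
    (hq0 : ∀ x y d, 0 ≤ q x y d)
    (hqY : ∀ y, 0 < ∑ x, ∑ d, q x y d)
    (hLS : ∀ x y d, 0 < (∑ d', q x y d') →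
      q x y d / (∑ d', q x y d') = (∑ x', q x' y d) / (∑ x', ∑ d', q x' y d'))
    (y : Y) (x x' : X)
    (hx : 0 < ∑ y', ∑ d, q x y' d)
    (hx' : 0 < ∑ y', ∑ d, q x' y' d)
    (hxA : 0 < (∑ d, q x y d) / (∑ x'', ∑ d, q x'' y d) ∧
      ∀ y' ≠ y, (∑ d, q x y' d) / (∑ x'', ∑ d, q x'' y' d) = 0)
    (hx'A : 0 < (∑ d, q x' y d) / (∑ x'', ∑ d, q x'' y d) ∧
      ∀ y' ≠ y, (∑ d, q x' y' d) / (∑ x'', ∑ d, q x'' y' d) = 0) :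
    ∀ d, (∑ y', q x y' d) / (∑ y', ∑ d', q x y' d') =
      (∑ y', q x' y' d) / (∑ y', ∑ d', q x' y' d') :=
  stmt_7_general X Y D q hq0 hqY hLS y x x' hxA hx'A
end

section
/- Suppose the matrix Q_{D|Y} ∈ ℝ^{r×k} has linearly independent columns, x lies in the anchor set A_y of label y, and x₀ (with q(x₀) > 0) does not lie in A_y. Then the domain posterior vectors differ: there exists a domain d with q(d | X = x) ≠ q(d | X = x₀). -/
/-!
Label shift says that, on the support of `q(x, y)`, the conditional `q(d | x, y)` is the
column `q(d | y)` of `Q_{D|Y}`; hence the domain posterior of `x` is `Q_{D|Y}` applied to its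
label posterior. Linear independence of the columns makes this map injective, so equal domain
posteriors force equal label posteriors. The label posterior of an anchor point of `y` is the
point mass at `y`, and a point of positive mass with that label posterior is itself an anchor
point of `y`.
-/

open Finset Matrix

section Posterior

variable {X Y D : Type} [Fintype Y] [Fintype D]

/-- The label posterior `q(y | x)` of a joint mass function `q(x, y, d)`. -/
noncomputable def labelPosterior (q : X → Y → D → ℝ) (x : X) : Y → ℝ :=
  fun y => (∑ d, q x y d) / ∑ y', ∑ d, q x y' d

/-- The domain posterior `q(d | x)` of a joint mass function `q(x, y, d)`. -/
noncomputable def domainPosterior (q : X → Y → D → ℝ) (x : X) : D → ℝ :=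
  fun d => (∑ y, q x y d) / ∑ y, ∑ d', q x y d'

theorem domainPosterior_eq_mulVec_labelPosterior {q : X → Y → D → ℝ} {Q : Matrix D Y ℝ}
    (hfac : ∀ x y d, q x y d = Q d y * ∑ d', q x y d') (x : X) :
    domainPosterior q x = Q *ᵥ labelPosterior q x := by
  funext d
  simp only [domainPosterior, labelPosterior, mulVec, dotProduct, ← mul_div_assoc, ← sum_div]
  exact congrArg (· / _) (sum_congr rfl fun y _ => hfac x y d)

end Posterior

theorem eq_mul_sum_of_div_sum_eq {ι : Type*} [Fintype ι] {p c : ι → ℝ} (hp : ∀ i, 0 ≤ p i)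
    (h : 0 < ∑ j, p j → ∀ i, p i / ∑ j, p j = c i) (i : ι) :
    p i = c i * ∑ j, p j := by
  rcases (sum_nonneg fun j _ => hp j).eq_or_lt with hzero | hpos
  · rw [← hzero, mul_zero]
    exact (sum_eq_zero_iff_of_nonneg fun j _ => hp j).mp hzero.symm i (mem_univ i)
  · exact (div_eq_iff hpos.ne').mp (h hpos i)

theorem div_sum_eq_single_iff {ι : Type*} [Fintype ι] [DecidableEq ι] {m : ι → ℝ}
    (hm : 0 < ∑ k, m k) (i : ι) :
    (fun j => m j / ∑ k, m k) = Pi.single i 1 ↔ 0 < m i ∧ ∀ j ≠ i, m j = 0 := by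
  constructor
  · intro h
    have hj : ∀ j, m j = (Pi.single i 1 : ι → ℝ) j * ∑ k, m k := fun j => by
      rw [← div_eq_iff hm.ne']
      exact congrFun h j
    exact ⟨by simpa [hj i] using hm, fun j hji => by simp [hj j, hji]⟩
  · rintro ⟨hi, hzero⟩
    have hsum : ∑ k, m k = m i := sum_eq_single i (fun j _ hji => hzero j hji) (by simp)
    funext j
    rcases eq_or_ne j i with rfl | hji
    · simp [hsum, hi.ne']
    · simp [hzero j hji, hji]

theorem stmt_8_general (X Y D : Type) [Fintype X] [Fintype Y] [Fintype D]
    (q : X → Y → D → ℝ)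
    (hq0 : ∀ x y d, 0 ≤ q x y d)
    (hqY : ∀ y, 0 < ∑ x, ∑ d, q x y d)
    (hLS : ∀ x y d, 0 < (∑ d', q x y d') →
      q x y d / (∑ d', q x y d') = (∑ x', q x' y d) / (∑ x', ∑ d', q x' y d'))
    (QDY : Matrix D Y ℝ)
    (hQDY : ∀ d y, QDY d y = (∑ x, q x y d) / (∑ x, ∑ d', q x y d'))
    (hcols : LinearIndependent ℝ (fun y : Y => fun d : D => QDY d y))
    (y : Y) (x x₀ : X)
    (hx : 0 < ∑ y', ∑ d, q x y' d)
    (hx₀ : 0 < ∑ y', ∑ d, q x₀ y' d)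
    (hxA : 0 < (∑ d, q x y d) / (∑ x'', ∑ d, q x'' y d) ∧
      ∀ y' ≠ y, (∑ d, q x y' d) / (∑ x'', ∑ d, q x'' y' d) = 0)
    (hx₀A : ¬ (0 < (∑ d, q x₀ y d) / (∑ x'', ∑ d, q x'' y d) ∧
      ∀ y' ≠ y, (∑ d, q x₀ y' d) / (∑ x'', ∑ d, q x'' y' d) = 0)) :
    ∃ d, (∑ y', q x y' d) / (∑ y', ∑ d', q x y' d') ≠
      (∑ y', q x₀ y' d) / (∑ y', ∑ d', q x₀ y' d') := by
  classical
  by_contra! h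
  have hfac : ∀ x y d, q x y d = QDY d y * ∑ d', q x y d' := fun x y =>
    eq_mul_sum_of_div_sum_eq (hq0 x y) fun hpos d => (hQDY d y).symm ▸ hLS x y d hpos
  have hlabel : labelPosterior q x = labelPosterior q x₀ := by
    apply mulVec_injective_iff.mpr hcols
    rw [← domainPosterior_eq_mulVec_labelPosterior hfac,
      ← domainPosterior_eq_mulVec_labelPosterior hfac]
    exact funext h
  simp only [div_pos_iff_of_pos_right (hqY y), div_eq_zero_iff, (hqY _).ne', or_false]
    at hxA hx₀A
  have hxδ : labelPosterior q x = Pi.single y 1 := (div_sum_eq_single_iff hx y).mpr hxA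
  have hx₀δ : labelPosterior q x₀ ≠ Pi.single y 1 := fun hδ =>
    hx₀A ((div_sum_eq_single_iff hx₀ y).mp hδ)
  exact hx₀δ (hlabel ▸ hxδ)

/-- If Q_{D|Y} has linearly independent columns, x is in the
anchor set A_y and x₀ (with q(x₀) > 0) is not, then the domain posterior
vectors of x and x₀ differ in some coordinate d. -/
theorem stmt_8 (X Y D : Type) [Fintype X] [Fintype Y] [Fintype D]
    (q : X → Y → D → ℝ)
    (hq0 : ∀ x y d, 0 ≤ q x y d)
    (hqY : ∀ y, 0 < ∑ x, ∑ d, q x y d)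
    (hrk : Fintype.card Y ≤ Fintype.card D)
    (hLS : ∀ x y d, 0 < (∑ d', q x y d') →
      q x y d / (∑ d', q x y d') = (∑ x', q x' y d) / (∑ x', ∑ d', q x' y d'))
    (QDY : Matrix D Y ℝ)
    (hQDY : ∀ d y, QDY d y = (∑ x, q x y d) / (∑ x, ∑ d', q x y d'))
    (hcols : LinearIndependent ℝ (fun y : Y => fun d : D => QDY d y))
    (y : Y) (x x₀ : X)
    (hx : 0 < ∑ y', ∑ d, q x y' d)
    (hx₀ : 0 < ∑ y', ∑ d, q x₀ y' d)
    (hxA : 0 < (∑ d, q x y d) / (∑ x'', ∑ d, q x'' y d) ∧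
      ∀ y' ≠ y, (∑ d, q x y' d) / (∑ x'', ∑ d, q x'' y' d) = 0)
    (hx₀A : ¬ (0 < (∑ d, q x₀ y d) / (∑ x'', ∑ d, q x'' y d) ∧
      ∀ y' ≠ y, (∑ d, q x₀ y' d) / (∑ x'', ∑ d, q x'' y' d) = 0)) :
    ∃ d, (∑ y', q x y' d) / (∑ y', ∑ d', q x y' d') ≠
      (∑ y', q x₀ y' d) / (∑ y', ∑ d', q x₀ y' d') :=
  stmt_8_general X Y D q hq0 hqY hLS QDY hQDY hcols y x x₀ hx hx₀ hxA hx₀A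
end

section
/- If x lies in the anchor set A_y of label y and q(x) > 0, then under label shift the domain posterior vector at x equals the y-th column of Q_{D|Y}: for every domain d, q(d | X = x) = q(d | Y = y). -/
/-! An anchor point `x` of `y` carries no joint mass on any other label, so the sums over labels
defining `q(d | x)` reduce to the row of `y`, and label shift says that row, normalised, is
`q(d | y)`. -/

theorem eq_zero_of_sum_div_eq_zero_s9 {ι : Type*} [Fintype ι] {f : ι → ℝ} {c : ℝ}
    (hf : ∀ i, 0 ≤ f i) (hc : 0 < c) (h : (∑ i, f i) / c = 0) (i : ι) : f i = 0 := by
  have hsum : ∑ i, f i = 0 := (div_eq_zero_iff.mp h).resolve_right hc.ne'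
  exact congrFun ((Fintype.sum_eq_zero_iff_of_nonneg hf).mp hsum) i

/-- If x lies in the anchor set A_y (and q(x) > 0), then under
label shift the domain posterior at x is the y-th column of Q_{D|Y}:
q(d|x) = q(d|y) for every d. -/
theorem stmt_9 (X Y D : Type) [Fintype X] [Fintype Y] [Fintype D]
    (q : X → Y → D → ℝ)
    (hq0 : ∀ x y d, 0 ≤ q x y d)
    (hqY : ∀ y, 0 < ∑ x, ∑ d, q x y d)
    (hLS : ∀ x y d, 0 < (∑ d', q x y d') →
      q x y d / (∑ d', q x y d') = (∑ x', q x' y d) / (∑ x', ∑ d', q x' y d'))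
    (y : Y) (x : X)
    (hx : 0 < ∑ y', ∑ d, q x y' d)
    (hxA : 0 < (∑ d, q x y d) / (∑ x'', ∑ d, q x'' y d) ∧
      ∀ y' ≠ y, (∑ d, q x y' d) / (∑ x'', ∑ d, q x'' y' d) = 0) :
    ∀ d, (∑ y', q x y' d) / (∑ y', ∑ d', q x y' d') =
      (∑ x', q x' y d) / (∑ x', ∑ d', q x' y d') := by
  have hanchor : ∀ y' ≠ y, ∀ d, q x y' d = 0 := fun y' hy' =>
    eq_zero_of_sum_div_eq_zero_s9 (hq0 x y') (hqY y') (hxA.2 y' hy')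
  have hrow : ∀ d, ∑ y', q x y' d = q x y d := fun d =>
    Fintype.sum_eq_single y fun y' hy' => hanchor y' hy' d
  have htotal : ∑ y', ∑ d', q x y' d' = ∑ d', q x y d' :=
    Fintype.sum_eq_single y fun y' hy' => Fintype.sum_eq_zero _ (hanchor y' hy')
  intro d
  rw [hrow d, htotal]
  exact hLS x y d (htotal ▸ hx)
end
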